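/- Median oscillation decomposition for general measures: for any locally finite Borel measure μ, any measurable f, any 0 < λ < 1/2, and any dyadic cube F₀ with 0 < μ(F₀) < ∞, there exists a (1−2λ)-sparse collection F of dyadic subcubes of F₀, containing F₀, such that |f − m(f, F̂₀)| 1_{F₀} ≤ C ∑_{F ∈ F} (ω_λ(f;F) + |m(f,F) − m(f,F̂)|) 1_F holds μ-almost everywhere, where C depends only on λ. -/

import Mathlib

open MeasureTheory Set ENNReal NNReal

noncomputable section

/-- A dyadic cube in `ℝ^d`: side length `2^n`, lower-left corner `m * 2^n`. -/
structure DyadicCube (d : ℕ) where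
  n : ℤ
  m : Fin d → ℤ

namespace DyadicCube

/-- The underlying set of a dyadic cube. -/
def toSet {d : ℕ} (Q : DyadicCube d) : Set (Fin d → ℝ) :=
  {x | ∀ i, (Q.m i : ℝ) * 2 ^ Q.n ≤ x i ∧ x i < ((Q.m i : ℝ) + 1) * 2 ^ Q.n}

/-- The dyadic parent of a dyadic cube. -/
def parent {d : ℕ} (Q : DyadicCube d) : DyadicCube d :=
  ⟨Q.n + 1, fun i => Int.fdiv (Q.m i) 2⟩

/-- The `k`-th dyadic ancestor of a dyadic cube. -/
def ancestor {d : ℕ} (k : ℕ) (Q : DyadicCube d) : DyadicCube d :=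
  parent^[k] Q

end DyadicCube

/-- `m` is a median of `f` on `Q` (w.r.t. `μ`). -/
def IsMedian {d : ℕ} (μ : Measure (Fin d → ℝ)) (f : (Fin d → ℝ) → ℝ)
    (Q : Set (Fin d → ℝ)) (m : ℝ) : Prop :=
  μ (Q ∩ {x | m < f x}) ≤ μ Q / 2 ∧ μ (Q ∩ {x | f x < m}) ≤ μ Q / 2

/-- The relative median oscillation `r_λ(f; Q)` of `f` about zero on `Q`. -/
def rOsc {d : ℕ} (μ : Measure (Fin d → ℝ)) (lam : ℝ) (f : (Fin d → ℝ) → ℝ)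
    (Q : Set (Fin d → ℝ)) : ℝ :=
  sInf {r : ℝ | 0 ≤ r ∧ μ (Q ∩ {x | r < |f x|}) ≤ ENNReal.ofReal lam * μ Q}

/-- The median oscillation `ω_λ(f; Q)`. -/
def mOsc {d : ℕ} (μ : Measure (Fin d → ℝ)) (lam : ℝ) (f : (Fin d → ℝ) → ℝ)
    (Q : Set (Fin d → ℝ)) : ℝ :=
  ⨅ c : ℝ, rOsc μ lam (fun x => f x - c) Q

/-- The average `⟨f⟩_Q = (1/μ(Q)) ∫_Q f dμ`. -/
def avg {d : ℕ} (μ : Measure (Fin d → ℝ)) (f : (Fin d → ℝ) → ℝ)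
    (Q : Set (Fin d → ℝ)) : ℝ :=
  (∫ x in Q, f x ∂μ) / (μ Q).toReal

/-- The `𝒮`-children of `F`: maximal members of `𝒮` strictly contained in `F`. -/
def sparseChildren {d : ℕ} (𝒮 : Set (DyadicCube d)) (F : DyadicCube d) :
    Set (DyadicCube d) :=
  {F' | F' ∈ 𝒮 ∧ F'.toSet ⊂ F.toSet ∧
    ∀ G ∈ 𝒮, G.toSet ⊂ F.toSet → F'.toSet ⊆ G.toSet → G = F'}

/-!
A stopping-time argument. The bad set of a cube `F` is `E_F = {x ∈ F : |f x - m_F| > r_F}`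
with `r_F = r_λ(f - m_F; F)`, so `μ E_F ≤ λ μ F`; the stopping children of `F` are the maximal
dyadic subcubes in which `E_F` has density at least `1/2`. They have total measure at most
`2λ μ F`, hence the `k`-th generation has measure at most `(2λ)^k μ F₀` and almost every point
lies in finitely many generations. A dyadic differentiation argument (outer regularity plus a
decomposition of open sets into maximal dyadic cubes) shows that almost every point of `E_F` lies
in a child. Along the chain of stopping cubes containing `x`, the median of a child differs from
that of its stopping parent by at most `r_F` plus the jump to its dyadic parent, which is not a
stopping cube; at the bottom of the chain `x ∉ E_F`. Telescoping and `r_F ≤ 2 ω_λ(f; F)` give the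
bound with `C = 2`.
-/

open Filter Topology

lemma ofReal_two_mul_eq (t : ℝ) : ENNReal.ofReal (2 * t) = 2 * ENNReal.ofReal t := by
  rw [ENNReal.ofReal_mul zero_le_two, ENNReal.ofReal_ofNat]

lemma ofReal_two_mul_mul_lt {t : ℝ} (ht : t < 1 / 2) {a : ℝ≥0∞} (ha₀ : a ≠ 0) (ha : a ≠ ⊤) :
    ENNReal.ofReal (2 * t) * a < a := by
  conv_rhs => rw [← one_mul a]
  rw [ENNReal.mul_lt_mul_iff_left ha₀ ha, ENNReal.ofReal_lt_one]
  linarith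

lemma ofReal_sum_le_tsum_indicator {ι α : Type*} {s : Set ι} {S : Finset ι} {E : ι → Set α}
    {a : ι → ℝ} {x : α} (ha : ∀ i ∈ S, 0 ≤ a i) (hS : ↑S ⊆ s) (hx : ∀ i ∈ S, x ∈ E i) :
    ENNReal.ofReal (∑ i ∈ S, a i) ≤
      ∑' i : s, (E i).indicator (fun _ => ENNReal.ofReal (a i)) x := by
  rw [ENNReal.ofReal_sum_of_nonneg ha,
    tsum_subtype s fun i => (E i).indicator (fun _ => ENNReal.ofReal (a i)) x]
  refine le_of_eq_of_le (Finset.sum_congr rfl fun i hi => ?_) (ENNReal.sum_le_tsum S)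
  rw [indicator_of_mem (hS hi), indicator_of_mem (hx i hi)]

namespace DyadicCube

variable {d : ℕ}

lemma mem_toSet_iff {Q : DyadicCube d} {x : Fin d → ℝ} :
    x ∈ Q.toSet ↔ ∀ i, ⌊x i / 2 ^ Q.n⌋ = Q.m i := by
  have h : (0 : ℝ) < 2 ^ Q.n := zpow_pos two_pos _
  refine forall_congr' fun i => ?_
  rw [Int.floor_eq_iff, le_div_iff₀ h, div_lt_iff₀ h]

def cubeAt (n : ℤ) (x : Fin d → ℝ) : DyadicCube d := ⟨n, fun i => ⌊x i / 2 ^ n⌋⟩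

lemma mem_cubeAt (n : ℤ) (x : Fin d → ℝ) : x ∈ (cubeAt n x).toSet :=
  mem_toSet_iff.2 fun _ => rfl

lemma eq_cubeAt_of_mem {Q : DyadicCube d} {x : Fin d → ℝ} (h : x ∈ Q.toSet) :
    Q = cubeAt Q.n x := by
  obtain ⟨n, m⟩ := Q
  simp only [cubeAt, mk.injEq, true_and]
  exact funext fun i => (mem_toSet_iff.1 h i).symm

lemma eq_of_mem_of_mem {P Q : DyadicCube d} {x : Fin d → ℝ} (hn : P.n = Q.n)
    (hP : x ∈ P.toSet) (hQ : x ∈ Q.toSet) : P = Q := by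
  rw [eq_cubeAt_of_mem hP, eq_cubeAt_of_mem hQ, hn]

lemma parent_cubeAt (n : ℤ) (x : Fin d → ℝ) : (cubeAt n x).parent = cubeAt (n + 1) x := by
  simp only [parent, cubeAt, mk.injEq, true_and]
  funext i
  rw [Int.fdiv_eq_ediv_of_nonneg _ zero_le_two, zpow_add_one₀ two_ne_zero, ← div_div]
  exact_mod_cast (Int.floor_div_natCast (x i / 2 ^ n) 2).symm

lemma toSet_subset_parent (Q : DyadicCube d) : Q.toSet ⊆ Q.parent.toSet := fun x hx => by
  rw [eq_cubeAt_of_mem hx, parent_cubeAt]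
  exact mem_cubeAt _ x

lemma cubeAt_subset_cubeAt {x : Fin d → ℝ} {n n' : ℤ} (h : n ≤ n') :
    (cubeAt n x).toSet ⊆ (cubeAt n' x).toSet := by
  induction n', h using Int.leInduction with
  | base => exact subset_rfl
  | succ k _ ih => exact ih.trans (parent_cubeAt k x ▸ toSet_subset_parent _)

lemma toSet_subset_of_mem_of_mem {P Q : DyadicCube d} {x : Fin d → ℝ} (h : P.n ≤ Q.n)
    (hP : x ∈ P.toSet) (hQ : x ∈ Q.toSet) : P.toSet ⊆ Q.toSet := by
  rw [eq_cubeAt_of_mem hP, eq_cubeAt_of_mem hQ]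
  exact cubeAt_subset_cubeAt h

lemma toSet_nonempty (Q : DyadicCube d) : Q.toSet.Nonempty :=
  ⟨fun i => (Q.m i : ℝ) * 2 ^ Q.n,
    fun _ => ⟨le_rfl, by nlinarith [zpow_pos (two_pos : (0 : ℝ) < 2) Q.n]⟩⟩

lemma measurableSet_toSet (Q : DyadicCube d) : MeasurableSet Q.toSet := by
  have : Q.toSet = ⋂ i, (fun x : Fin d → ℝ => x i) ⁻¹'
      Ico ((Q.m i : ℝ) * 2 ^ Q.n) (((Q.m i : ℝ) + 1) * 2 ^ Q.n) := by
    ext x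
    simp [toSet]
  rw [this]
  exact MeasurableSet.iInter fun i => measurableSet_Ico.preimage (measurable_pi_apply i)

instance : Countable (DyadicCube d) :=
  Function.Injective.countable (f := fun Q : DyadicCube d => (Q.n, Q.m))
    fun ⟨_, _⟩ ⟨_, _⟩ h => by simpa using h

lemma abs_sub_lt_of_mem {Q : DyadicCube d} {x y : Fin d → ℝ} (hx : x ∈ Q.toSet)
    (hy : y ∈ Q.toSet) (i : Fin d) : |y i - x i| < 2 ^ Q.n := by
  obtain ⟨hx₁, hx₂⟩ := hx i
  obtain ⟨hy₁, hy₂⟩ := hy i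
  rw [abs_sub_lt_iff]
  constructor <;> linarith

lemma exists_cubeAt_subset_of_isOpen {U : Set (Fin d → ℝ)} (hU : IsOpen U) {x : Fin d → ℝ}
    (hx : x ∈ U) (s : ℤ) : ∃ n ≤ s, (cubeAt n x).toSet ⊆ U := by
  obtain ⟨ε, hε, hball⟩ := Metric.isOpen_iff.1 hU x hx
  obtain ⟨k, hk⟩ := exists_pow_lt_of_lt_one hε (one_half_lt_one : (1 / 2 : ℝ) < 1)
  refine ⟨min (-k) s, min_le_right _ _, fun y hy => hball ?_⟩
  rw [Metric.mem_ball, dist_pi_lt_iff hε]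
  intro i
  calc dist (y i) (x i) = |y i - x i| := Real.dist_eq _ _
    _ < 2 ^ min (-(k : ℤ)) s := abs_sub_lt_of_mem (mem_cubeAt _ x) hy i
    _ ≤ 2 ^ (-(k : ℤ)) := zpow_le_zpow_right₀ one_le_two (min_le_left _ _)
    _ = (1 / 2) ^ k := by rw [zpow_neg, zpow_natCast, one_div, inv_pow]
    _ < ε := hk

/-- Maximality is measured by scale rather than by inclusion of sets, since `toSet` is not
injective when `d = 0`. -/
def maximalCubes (T : Set (DyadicCube d)) : Set (DyadicCube d) :=
  {Q | Q ∈ T ∧ ∀ Q' ∈ T, Q.toSet ⊆ Q'.toSet → Q'.n ≤ Q.n}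

variable {T : Set (DyadicCube d)}

lemma maximalCubes_subset : maximalCubes T ⊆ T := fun _ hQ => hQ.1

lemma pairwiseDisjoint_maximalCubes : (maximalCubes T).PairwiseDisjoint toSet := by
  intro P hP Q hQ hne
  refine Set.disjoint_left.2 fun x hxP hxQ => hne (eq_of_mem_of_mem ?_ hxP hxQ)
  rcases le_total P.n Q.n with h | h
  · exact le_antisymm h (hP.2 Q hQ.1 (toSet_subset_of_mem_of_mem h hxP hxQ))
  · exact le_antisymm (hQ.2 P hP.1 (toSet_subset_of_mem_of_mem h hxQ hxP)) h

lemma exists_mem_maximalCubes_superset {s : ℤ} (hT : ∀ Q ∈ T, Q.n ≤ s) {Q : DyadicCube d}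
    (hQ : Q ∈ T) : ∃ Q' ∈ maximalCubes T, Q.toSet ⊆ Q'.toSet := by
  obtain ⟨x, hx⟩ := Q.toSet_nonempty
  obtain ⟨n, ⟨hnT, hQn⟩, hmax⟩ := Int.exists_greatest_of_bdd
    (P := fun n => cubeAt n x ∈ T ∧ Q.toSet ⊆ (cubeAt n x).toSet)
    ⟨s, fun n hn => hT _ hn.1⟩ ⟨Q.n, by rwa [← eq_cubeAt_of_mem hx], by rw [← eq_cubeAt_of_mem hx]⟩
  refine ⟨cubeAt n x, ⟨hnT, fun Q' hQ' hsub => ?_⟩, hQn⟩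
  have hxQ' := eq_cubeAt_of_mem (hsub (mem_cubeAt n x))
  exact hmax Q'.n ⟨hxQ' ▸ hQ', hxQ' ▸ hQn.trans hsub⟩

/-- By outer regularity `B` is almost an open set, and an open set is a disjoint union of maximal
small dyadic cubes. -/
lemma measure_eq_zero_of_two_mul_measure_inter_le (ν : Measure (Fin d → ℝ)) [IsFiniteMeasure ν]
    {B : Set (Fin d → ℝ)} (s : ℤ)
    (h : ∀ Q : DyadicCube d, Q.n ≤ s → 2 * ν (Q.toSet ∩ B) ≤ ν Q.toSet) : ν B = 0 := by
  have hopen : ∀ U, B ⊆ U → IsOpen U → 2 * ν B ≤ ν U := by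
    intro U hBU hU
    set T := {Q : DyadicCube d | Q.n ≤ s ∧ Q.toSet ⊆ U}
    set M := maximalCubes T
    have hcover : U ⊆ ⋃ Q ∈ M, Q.toSet := fun x hx => by
      obtain ⟨n, hn, hsub⟩ := exists_cubeAt_subset_of_isOpen hU hx s
      obtain ⟨Q, hQ, hQsub⟩ := exists_mem_maximalCubes_superset (T := T) (fun Q hQ => hQ.1)
        (Q := cubeAt n x) ⟨hn, hsub⟩
      exact mem_biUnion hQ (hQsub (mem_cubeAt n x))
    have hBM : B ⊆ ⋃ Q ∈ M, Q.toSet ∩ B := fun x hx => by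
      obtain ⟨Q, hQ, hxQ⟩ := mem_iUnion₂.1 (hcover (hBU hx))
      exact mem_biUnion hQ ⟨hxQ, hx⟩
    calc 2 * ν B ≤ 2 * ∑' Q : M, ν ((Q : DyadicCube d).toSet ∩ B) := by
          gcongr
          exact (measure_mono hBM).trans (measure_biUnion_le _ M.to_countable _)
      _ = ∑' Q : M, 2 * ν ((Q : DyadicCube d).toSet ∩ B) := ENNReal.tsum_mul_left.symm
      _ ≤ ∑' Q : M, ν (Q : DyadicCube d).toSet :=
          ENNReal.tsum_le_tsum fun Q => h Q (maximalCubes_subset Q.2).1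
      _ = ν (⋃ Q ∈ M, Q.toSet) := (measure_biUnion M.to_countable
          pairwiseDisjoint_maximalCubes fun Q _ => Q.measurableSet_toSet).symm
      _ ≤ ν U := measure_mono (iUnion₂_subset fun Q hQ => (maximalCubes_subset hQ).2)
  have h2 : 2 * ν B ≤ ν B := by
    conv_rhs => rw [Set.measure_eq_iInf_isOpen B ν]
    exact le_iInf₂ fun U hBU => le_iInf (hopen U hBU)
  rw [two_mul] at h2
  exact nonpos_iff_eq_zero.1
    (ENNReal.le_of_add_le_add_left (measure_ne_top ν B) (by rwa [add_zero]))

lemma measure_eq_zero_of_forall_subcube {μ : Measure (Fin d → ℝ)} {F : DyadicCube d}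
    (hF : μ F.toSet ≠ ⊤) {B : Set (Fin d → ℝ)} (hBF : B ⊆ F.toSet)
    (h : ∀ Q : DyadicCube d, Q.n < F.n → Q.toSet ⊆ F.toSet → 2 * μ (Q.toSet ∩ B) ≤ μ Q.toSet) :
    μ B = 0 := by
  have : Fact (μ F.toSet < ⊤) := ⟨hF.lt_top⟩
  rw [← Measure.restrict_eq_self μ hBF]
  refine measure_eq_zero_of_two_mul_measure_inter_le _ (F.n - 1) fun Q hQ => ?_
  rw [Measure.restrict_apply' F.measurableSet_toSet, Measure.restrict_apply' F.measurableSet_toSet]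
  by_cases hQF : (Q.toSet ∩ F.toSet).Nonempty
  · obtain ⟨x, hxQ, hxF⟩ := hQF
    have hsub := toSet_subset_of_mem_of_mem (by omega) hxQ hxF
    rw [inter_eq_left.2 hsub, inter_eq_left.2 (inter_subset_left.trans hsub)]
    exact h Q (by omega) hsub
  · rw [not_nonempty_iff_eq_empty] at hQF
    rw [inter_right_comm, hQF, empty_inter, measure_empty, mul_zero]

end DyadicCube

section Oscillation

variable {d : ℕ} {μ : Measure (Fin d → ℝ)} {lam : ℝ} {f g : (Fin d → ℝ) → ℝ}
  {A : Set (Fin d → ℝ)}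

lemma rOsc_nonneg : 0 ≤ rOsc μ lam g A := Real.sInf_nonneg fun _ hr => hr.1

lemma mOsc_nonneg : 0 ≤ mOsc μ lam f A := le_ciInf fun _ => rOsc_nonneg

lemma rOsc_eq_zero_of_measure_eq_zero (hA : μ A = 0) : rOsc μ lam g A = 0 := by
  have : {r : ℝ | 0 ≤ r ∧ μ (A ∩ {x | r < |g x|}) ≤ ENNReal.ofReal lam * μ A} = Ici 0 := by
    ext r
    simp [measure_mono_null inter_subset_left hA]
  rw [rOsc, this, csInf_Ici]

lemma nonempty_rOsc_set (hlam : 0 < lam) (hg : Measurable g) (hA : MeasurableSet A)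
    (hfin : μ A ≠ ⊤) :
    {r : ℝ | 0 ≤ r ∧ μ (A ∩ {x | r < |g x|}) ≤ ENNReal.ofReal lam * μ A}.Nonempty := by
  rcases eq_or_ne (μ A) 0 with h0 | hpos
  · exact ⟨0, le_rfl, by simp [measure_mono_null inter_subset_left h0]⟩
  have htend := tendsto_measure_iInter_atTop (μ := μ) (s := fun n : ℕ => A ∩ {x | n < |g x|})
    (fun n => (hA.inter (measurableSet_lt measurable_const hg.abs)).nullMeasurableSet)
    (fun m n hmn => inter_subset_inter_right _ fun x hx =>
      show (m : ℝ) < |g x| from (Nat.cast_le.2 hmn).trans_lt hx)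
    ⟨0, ne_top_of_le_ne_top hfin (measure_mono inter_subset_left)⟩
  have hempty : ⋂ n : ℕ, A ∩ {x | (n : ℝ) < |g x|} = ∅ :=
    eq_empty_of_forall_notMem fun x hx => by
      obtain ⟨n, hn⟩ := exists_nat_gt |g x|
      exact lt_asymm hn (mem_iInter.1 hx n).2
  rw [hempty, measure_empty] at htend
  have hc : 0 < ENNReal.ofReal lam * μ A := ENNReal.mul_pos (ENNReal.ofReal_pos.2 hlam).ne' hpos
  obtain ⟨n, hn⟩ := (htend.eventually (gt_mem_nhds hc)).exists
  exact ⟨n, n.cast_nonneg, hn.le⟩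

lemma measure_lt_rOsc_le (hlam : 0 < lam) (hg : Measurable g) (hA : MeasurableSet A)
    (hfin : μ A ≠ ⊤) :
    μ (A ∩ {x | rOsc μ lam g A < |g x|}) ≤ ENNReal.ofReal lam * μ A := by
  obtain ⟨u, hu_anti, hu_lim, hu_mem⟩ :=
    exists_seq_tendsto_sInf (nonempty_rOsc_set hlam hg hA hfin) ⟨0, fun r hr => hr.1⟩
  have hunion : A ∩ {x | rOsc μ lam g A < |g x|} = ⋃ n, A ∩ {x | u n < |g x|} := by
    ext x
    simp only [mem_inter_iff, mem_ofPred_eq, mem_iUnion]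
    constructor
    · rintro ⟨hxA, hx⟩
      obtain ⟨n, hn⟩ := (hu_lim.eventually (gt_mem_nhds hx)).exists
      exact ⟨n, hxA, hn⟩
    · rintro ⟨n, hxA, hx⟩
      exact ⟨hxA, lt_of_le_of_lt (csInf_le ⟨0, fun r hr => hr.1⟩ (hu_mem n)) hx⟩
  rw [hunion, Monotone.measure_iUnion (s := fun n => A ∩ {x | u n < |g x|}) fun m n hmn =>
    inter_subset_inter_right _ fun x hx => show u n < |g x| from (hu_anti hmn).trans_lt hx]
  exact iSup_le fun n => (hu_mem n).2

lemma rOsc_le_add {g₁ g₂ : (Fin d → ℝ) → ℝ} {δ : ℝ} (hlam : 0 < lam) (hg₂ : Measurable g₂)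
    (hA : MeasurableSet A) (hfin : μ A ≠ ⊤) (hδ : 0 ≤ δ) (h : ∀ x, |g₁ x| ≤ |g₂ x| + δ) :
    rOsc μ lam g₁ A ≤ δ + rOsc μ lam g₂ A := by
  refine csInf_le ⟨0, fun _ hr => hr.1⟩ ⟨add_nonneg hδ rOsc_nonneg, ?_⟩
  refine (measure_mono (inter_subset_inter_right _ fun x hx => ?_)).trans
    (measure_lt_rOsc_le hlam hg₂ hA hfin)
  have : δ + rOsc μ lam g₂ A < |g₁ x| := hx
  exact show rOsc μ lam g₂ A < |g₂ x| by linarith [h x]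

lemma isMedian_of_measure_eq_zero (hA : μ A = 0) (m : ℝ) : IsMedian μ f A m := by
  simp [IsMedian, measure_mono_null inter_subset_left hA]

lemma IsMedian.neg {m : ℝ} (h : IsMedian μ f A m) : IsMedian μ (fun x => -f x) A (-m) := by
  simpa [IsMedian, and_comm] using h

lemma sub_le_of_measure_lt_le_half {m c r : ℝ} (hfin : μ A ≠ ⊤)
    (hm : μ (A ∩ {x | m < f x}) ≤ μ A / 2) (hr : 2 * μ (A ∩ {x | r < |f x - c|}) < μ A) :
    c - r ≤ m := by
  by_contra! hlt
  have hcover : A ⊆ (A ∩ {x | m < f x}) ∪ (A ∩ {x | r < |f x - c|}) := fun x hx => by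
    by_cases h : m < f x
    · exact Or.inl ⟨hx, h⟩
    · refine Or.inr ⟨hx, ?_⟩
      show r < |f x - c|
      rw [abs_sub_comm]
      exact (by linarith : r < c - f x).trans_le (le_abs_self _)
  have ht : μ (A ∩ {x | r < |f x - c|}) < μ A / 2 := by
    rwa [ENNReal.lt_div_iff_mul_lt (by simp) (by simp), mul_comm]
  have hhalf : μ A / 2 ≠ ⊤ := ENNReal.div_ne_top hfin two_ne_zero
  exact lt_irrefl (μ A) <| calc
    μ A ≤ μ (A ∩ {x | m < f x}) + μ (A ∩ {x | r < |f x - c|}) :=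
        (measure_mono hcover).trans (measure_union_le _ _)
    _ < μ A / 2 + μ A / 2 := ENNReal.add_lt_add_of_le_of_lt (ne_top_of_le_ne_top hhalf hm) hm ht
    _ = μ A := ENNReal.add_halves _

lemma IsMedian.abs_sub_le_of_two_mul_measure_lt {m c r : ℝ} (hmed : IsMedian μ f A m)
    (hfin : μ A ≠ ⊤) (hr : 2 * μ (A ∩ {x | r < |f x - c|}) < μ A) : |m - c| ≤ r := by
  have hneg : ∀ x, |-f x - -c| = |f x - c| := fun x => by rw [neg_sub_neg, abs_sub_comm]
  have h₁ := sub_le_of_measure_lt_le_half hfin hmed.1 hr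
  have h₂ := sub_le_of_measure_lt_le_half (f := fun x => -f x) (c := -c) hfin hmed.neg.1
    (by simpa only [hneg] using hr)
  rw [abs_le]
  constructor <;> linarith

variable {m : ℝ}

lemma IsMedian.abs_sub_le_rOsc (hmed : IsMedian μ f A m) (hlam0 : 0 < lam) (hlam1 : lam < 1 / 2)
    (hf : Measurable f) (hA : MeasurableSet A) (hpos : μ A ≠ 0) (hfin : μ A ≠ ⊤) (c : ℝ) :
    |m - c| ≤ rOsc μ lam (fun x => f x - c) A := by
  refine hmed.abs_sub_le_of_two_mul_measure_lt hfin ?_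
  calc 2 * μ (A ∩ {x | rOsc μ lam (fun x => f x - c) A < |f x - c|})
      ≤ 2 * (ENNReal.ofReal lam * μ A) := by
        gcongr
        exact measure_lt_rOsc_le hlam0 (hf.sub measurable_const) hA hfin
    _ = ENNReal.ofReal (2 * lam) * μ A := by rw [ofReal_two_mul_eq, mul_assoc]
    _ < μ A := ofReal_two_mul_mul_lt hlam1 hpos hfin

lemma IsMedian.rOsc_sub_le_two_mul_mOsc (hmed : IsMedian μ f A m) (hlam0 : 0 < lam)
    (hlam1 : lam < 1 / 2) (hf : Measurable f) (hA : MeasurableSet A) (hfin : μ A ≠ ⊤) :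
    rOsc μ lam (fun x => f x - m) A ≤ 2 * mOsc μ lam f A := by
  rcases eq_or_ne (μ A) 0 with h0 | hpos
  · rw [rOsc_eq_zero_of_measure_eq_zero h0]
    exact mul_nonneg zero_le_two mOsc_nonneg
  rw [← div_le_iff₀' two_pos]
  refine le_ciInf fun c => ?_
  have h₁ := hmed.abs_sub_le_rOsc hlam0 hlam1 hf hA hpos hfin c
  have h₂ : rOsc μ lam (fun x => f x - m) A ≤ |m - c| + rOsc μ lam (fun x => f x - c) A :=
    rOsc_le_add hlam0 (hf.sub measurable_const) hA hfin (abs_nonneg _) fun x =>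
      (abs_sub_le _ c _).trans_eq (by rw [abs_sub_comm c m])
  linarith

end Oscillation

section StoppingTime

open DyadicCube

variable {d : ℕ} (μ : Measure (Fin d → ℝ)) (lam : ℝ) (f : (Fin d → ℝ) → ℝ)
  (med : DyadicCube d → ℝ)

def rOscMed (F : DyadicCube d) : ℝ := rOsc μ lam (fun x => f x - med F) F.toSet

def badSet (F : DyadicCube d) : Set (Fin d → ℝ) :=
  F.toSet ∩ {x | rOscMed μ lam f med F < |f x - med F|}

def IsStoppingCube (F Q : DyadicCube d) : Prop :=
  Q.n < F.n ∧ Q.toSet ⊆ F.toSet ∧ μ Q.toSet ≤ 2 * μ (Q.toSet ∩ badSet μ lam f med F)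

def stoppingChildren (F : DyadicCube d) : Set (DyadicCube d) :=
  maximalCubes {Q | IsStoppingCube μ lam f med F Q}

def stoppingGen (F₀ : DyadicCube d) : ℕ → Set (DyadicCube d)
  | 0 => {F₀}
  | k + 1 => ⋃ F ∈ stoppingGen F₀ k, stoppingChildren μ lam f med F

def stoppingFamily (F₀ : DyadicCube d) : Set (DyadicCube d) :=
  ⋃ k, stoppingGen μ lam f med F₀ k

variable {μ lam f med} {F₀ F G H Q : DyadicCube d}

lemma n_lt_of_mem_stoppingChildren (hQ : Q ∈ stoppingChildren μ lam f med F) : Q.n < F.n :=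
  hQ.1.1

lemma toSet_subset_of_mem_stoppingChildren (hQ : Q ∈ stoppingChildren μ lam f med F) :
    Q.toSet ⊆ F.toSet :=
  hQ.1.2.1

lemma mem_stoppingGen_succ {k : ℕ} :
    Q ∈ stoppingGen μ lam f med F₀ (k + 1) ↔
      ∃ F ∈ stoppingGen μ lam f med F₀ k, Q ∈ stoppingChildren μ lam f med F := by
  simp [stoppingGen]

lemma pairwiseDisjoint_stoppingGen (k : ℕ) :
    (stoppingGen μ lam f med F₀ k).PairwiseDisjoint toSet := by
  induction k with
  | zero => exact pairwiseDisjoint_singleton _ _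
  | succ k ih =>
    intro Q₁ hQ₁ Q₂ hQ₂ hne
    obtain ⟨F₁, hF₁, hQ₁⟩ := mem_stoppingGen_succ.1 hQ₁
    obtain ⟨F₂, hF₂, hQ₂⟩ := mem_stoppingGen_succ.1 hQ₂
    rcases eq_or_ne F₁ F₂ with rfl | hF
    · exact pairwiseDisjoint_maximalCubes hQ₁ hQ₂ hne
    · exact (ih hF₁ hF₂ hF).mono (toSet_subset_of_mem_stoppingChildren hQ₁)
        (toSet_subset_of_mem_stoppingChildren hQ₂)

lemma toSet_subset_of_mem_stoppingGen {k : ℕ} (hF : F ∈ stoppingGen μ lam f med F₀ k) :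
    F.toSet ⊆ F₀.toSet := by
  induction k generalizing F with
  | zero => rw [mem_singleton_iff.1 hF]
  | succ k ih =>
    obtain ⟨G, hG, hFG⟩ := mem_stoppingGen_succ.1 hF
    exact (toSet_subset_of_mem_stoppingChildren hFG).trans (ih hG)

lemma mem_stoppingFamily {k : ℕ} (hF : F ∈ stoppingGen μ lam f med F₀ k) :
    F ∈ stoppingFamily μ lam f med F₀ :=
  mem_iUnion.2 ⟨k, hF⟩

lemma toSet_subset_of_mem_stoppingFamily (hF : F ∈ stoppingFamily μ lam f med F₀) :
    F.toSet ⊆ F₀.toSet :=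
  let ⟨_, hk⟩ := mem_iUnion.1 hF
  toSet_subset_of_mem_stoppingGen hk

lemma measure_ne_top_of_mem_stoppingFamily (hF₀ : μ F₀.toSet ≠ ⊤)
    (hF : F ∈ stoppingFamily μ lam f med F₀) : μ F.toSet ≠ ⊤ :=
  ne_top_of_le_ne_top hF₀ (measure_mono (toSet_subset_of_mem_stoppingFamily hF))

lemma exists_superset_mem_stoppingGen {b k : ℕ} (hH : H ∈ stoppingGen μ lam f med F₀ (b + k)) :
    ∃ A ∈ stoppingGen μ lam f med F₀ b, H.toSet ⊆ A.toSet := by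
  induction k generalizing H with
  | zero => exact ⟨H, hH, subset_rfl⟩
  | succ k ih =>
    obtain ⟨G, hG, hHG⟩ := mem_stoppingGen_succ.1 hH
    obtain ⟨A, hA, hGA⟩ := ih hG
    exact ⟨A, hA, (toSet_subset_of_mem_stoppingChildren hHG).trans hGA⟩

/-- Generations are pairwise disjoint, so `G` belongs to an earlier generation than `H`, and the
ancestor of `H` one generation below `G` is a child of `G`. -/
lemma exists_stoppingChildren_superset (hH : H ∈ stoppingFamily μ lam f med F₀)
    (hG : G ∈ stoppingFamily μ lam f med F₀) (hHG : H.toSet ⊂ G.toSet) :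
    ∃ Q ∈ stoppingChildren μ lam f med G, H.toSet ⊆ Q.toSet := by
  obtain ⟨a, ha⟩ := mem_iUnion.1 hH
  obtain ⟨b, hb⟩ := mem_iUnion.1 hG
  obtain ⟨x, hx⟩ := H.toSet_nonempty
  have hba : b < a := by
    by_contra! hab
    obtain ⟨A, hA, hGA⟩ := exists_superset_mem_stoppingGen (k := b - a)
      (by rwa [Nat.add_sub_cancel' hab] : G ∈ stoppingGen μ lam f med F₀ (a + (b - a)))
    obtain rfl := (pairwiseDisjoint_stoppingGen a).elim_set ha hA x hx (hGA (hHG.subset hx))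
    exact hHG.2 hGA
  obtain ⟨A, hA, hHA⟩ := exists_superset_mem_stoppingGen (k := a - (b + 1))
    (by rwa [Nat.add_sub_cancel' hba] : H ∈ stoppingGen μ lam f med F₀ (b + 1 + (a - (b + 1))))
  obtain ⟨G', hG', hAG'⟩ := mem_stoppingGen_succ.1 hA
  obtain rfl := (pairwiseDisjoint_stoppingGen b).elim_set hG' hb x
    (toSet_subset_of_mem_stoppingChildren hAG' (hHA hx)) (hHG.subset hx)
  exact ⟨A, hAG', hHA⟩

lemma measurableSet_badSet (hf : Measurable f) (F : DyadicCube d) :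
    MeasurableSet (badSet μ lam f med F) :=
  F.measurableSet_toSet.inter (measurableSet_lt measurable_const (hf.sub measurable_const).abs)

lemma measure_badSet_le (hlam0 : 0 < lam) (hf : Measurable f) (hF : μ F.toSet ≠ ⊤) :
    μ (badSet μ lam f med F) ≤ ENNReal.ofReal lam * μ F.toSet :=
  measure_lt_rOsc_le hlam0 (hf.sub measurable_const) F.measurableSet_toSet hF

lemma tsum_measure_stoppingChildren_le (hlam0 : 0 < lam) (hf : Measurable f)
    (hF : μ F.toSet ≠ ⊤) :
    ∑' Q : stoppingChildren μ lam f med F, μ (Q : DyadicCube d).toSet ≤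
      ENNReal.ofReal (2 * lam) * μ F.toSet := by
  set C := stoppingChildren μ lam f med F
  calc ∑' Q : C, μ (Q : DyadicCube d).toSet
      ≤ ∑' Q : C, 2 * μ ((Q : DyadicCube d).toSet ∩ badSet μ lam f med F) :=
        ENNReal.tsum_le_tsum fun Q => Q.2.1.2.2
    _ = 2 * μ (⋃ Q ∈ C, Q.toSet ∩ badSet μ lam f med F) := by
        rw [ENNReal.tsum_mul_left, measure_biUnion C.to_countable
          (pairwiseDisjoint_maximalCubes.mono fun _ => inter_subset_left)
          fun Q _ => Q.measurableSet_toSet.inter (measurableSet_badSet hf F)]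
    _ ≤ 2 * (ENNReal.ofReal lam * μ F.toSet) := by
        gcongr
        exact (measure_mono (iUnion₂_subset fun _ _ => inter_subset_right)).trans
          (measure_badSet_le hlam0 hf hF)
    _ = ENNReal.ofReal (2 * lam) * μ F.toSet := by rw [ofReal_two_mul_eq, mul_assoc]

lemma measure_biUnion_stoppingGen_le (hlam0 : 0 < lam) (hf : Measurable f)
    (hF₀ : μ F₀.toSet ≠ ⊤) (k : ℕ) :
    μ (⋃ F ∈ stoppingGen μ lam f med F₀ k, F.toSet) ≤
      ENNReal.ofReal (2 * lam) ^ k * μ F₀.toSet := by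
  induction k with
  | zero => simp [stoppingGen]
  | succ k ih =>
    set S := stoppingGen μ lam f med F₀ k
    have hunion : ⋃ Q ∈ stoppingGen μ lam f med F₀ (k + 1), Q.toSet =
        ⋃ F ∈ S, ⋃ Q ∈ stoppingChildren μ lam f med F, Q.toSet := by
      simp only [stoppingGen, biUnion_iUnion]
      rfl
    calc μ (⋃ Q ∈ stoppingGen μ lam f med F₀ (k + 1), Q.toSet)
        ≤ ∑' F : S, μ (⋃ Q ∈ stoppingChildren μ lam f med F, Q.toSet) :=
          hunion ▸ measure_biUnion_le _ S.to_countable _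
      _ ≤ ∑' F : S, ENNReal.ofReal (2 * lam) * μ (F : DyadicCube d).toSet :=
          ENNReal.tsum_le_tsum fun F => (measure_biUnion_le _ (to_countable _) _).trans
            (tsum_measure_stoppingChildren_le hlam0 hf
              (measure_ne_top_of_mem_stoppingFamily hF₀ (mem_stoppingFamily F.2)))
      _ = ENNReal.ofReal (2 * lam) * μ (⋃ F ∈ S, F.toSet) := by
          rw [ENNReal.tsum_mul_left, measure_biUnion S.to_countable
            (pairwiseDisjoint_stoppingGen k) fun F _ => F.measurableSet_toSet]
      _ ≤ ENNReal.ofReal (2 * lam) ^ (k + 1) * μ F₀.toSet := by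
          rw [pow_succ', mul_assoc]
          gcongr

lemma measure_iInter_biUnion_stoppingGen (hlam0 : 0 < lam) (hlam1 : lam < 1 / 2)
    (hf : Measurable f) (hF₀ : μ F₀.toSet ≠ ⊤) :
    μ (⋂ k, ⋃ F ∈ stoppingGen μ lam f med F₀ k, F.toSet) = 0 := by
  have hlt : ENNReal.ofReal (2 * lam) < 1 := by
    rw [ENNReal.ofReal_lt_one]
    linarith
  have htend : Tendsto (fun k => ENNReal.ofReal (2 * lam) ^ k * μ F₀.toSet) atTop (𝓝 0) := by
    simpa using ENNReal.Tendsto.mul_const (ENNReal.tendsto_pow_atTop_nhds_zero_of_lt_one hlt)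
      (Or.inr hF₀)
  exact le_antisymm (ge_of_tendsto' htend fun k => (measure_mono (iInter_subset _ k)).trans
    (measure_biUnion_stoppingGen_le hlam0 hf hF₀ k)) zero_le

/-- A cube of scale `< F.n` either is a stopping cube, hence lies inside a child, or meets the bad
set in density `< 1/2`. -/
lemma measure_badSet_diff_stoppingChildren (hF : μ F.toSet ≠ ⊤) :
    μ (badSet μ lam f med F \ ⋃ Q ∈ stoppingChildren μ lam f med F, Q.toSet) = 0 := by
  refine measure_eq_zero_of_forall_subcube hF (Set.sdiff_subset.trans inter_subset_left)
    fun Q hQn hQF => ?_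
  by_cases hQ : IsStoppingCube μ lam f med F Q
  · obtain ⟨Q', hQ', hQQ'⟩ := exists_mem_maximalCubes_superset
      (T := {Q | IsStoppingCube μ lam f med F Q}) (s := F.n) (fun _ h => h.1.le) hQ
    have hempty : Q.toSet ∩ (badSet μ lam f med F \
        ⋃ Q ∈ stoppingChildren μ lam f med F, Q.toSet) = ∅ :=
      eq_empty_of_forall_notMem fun x hx => hx.2.2 (mem_biUnion hQ' (hQQ' hx.1))
    rw [hempty, measure_empty, mul_zero]
    exact zero_le
  · have hlt : 2 * μ (Q.toSet ∩ badSet μ lam f med F) < μ Q.toSet := by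
      simpa [IsStoppingCube, hQn, hQF] using hQ
    exact le_trans (by gcongr; exact Set.sdiff_subset) hlt.le

/-- The dyadic parent of a child is not a stopping cube, so its median is `r_λ`-close to `med F`. -/
lemma abs_med_sub_med_le (hmed : ∀ Q : DyadicCube d, IsMedian μ f Q.toSet (med Q))
    (hF : μ F.toSet ≠ ⊤) (hQ : Q ∈ stoppingChildren μ lam f med F) :
    |med Q - med F| ≤ |med Q - med Q.parent| + rOscMed μ lam f med F := by
  obtain ⟨x, hx⟩ := Q.toSet_nonempty
  have hxP := Q.toSet_subset_parent hx
  have hxF := toSet_subset_of_mem_stoppingChildren hQ hx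
  have hQn := n_lt_of_mem_stoppingChildren hQ
  have hPF : Q.parent.toSet ⊆ F.toSet :=
    toSet_subset_of_mem_of_mem (show Q.n + 1 ≤ F.n by omega) hxP hxF
  rcases eq_or_ne Q.parent F with hP | hP
  · have : 0 ≤ rOscMed μ lam f med F := rOsc_nonneg
    rw [← hP] at this ⊢
    linarith
  have hPn : Q.parent.n < F.n := lt_of_le_of_ne (show Q.n + 1 ≤ F.n by omega)
    fun h => hP (eq_of_mem_of_mem h hxP hxF)
  have hnot : ¬ IsStoppingCube μ lam f med F Q.parent := fun h => by
    have := hQ.2 _ h Q.toSet_subset_parent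
    simp [parent] at this
  have hlt : 2 * μ (Q.parent.toSet ∩ badSet μ lam f med F) < μ Q.parent.toSet := by
    simpa [IsStoppingCube, hPn, hPF] using hnot
  rw [badSet, ← inter_assoc, inter_eq_left.2 hPF] at hlt
  have := (hmed Q.parent).abs_sub_le_of_two_mul_measure_lt
    (ne_top_of_le_ne_top hF (measure_mono hPF)) hlt
  calc |med Q - med F| ≤ |med Q - med Q.parent| + |med Q.parent - med F| := abs_sub_le _ _ _
    _ ≤ |med Q - med Q.parent| + rOscMed μ lam f med F := by gcongr

end StoppingTime

section Decomposition

open DyadicCube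

variable {d : ℕ} {μ : Measure (Fin d → ℝ)} {lam : ℝ} {f : (Fin d → ℝ) → ℝ}
  {med : DyadicCube d → ℝ} {F₀ F : DyadicCube d}

lemma tsum_measure_sparseChildren_le (hlam0 : 0 < lam) (hf : Measurable f)
    (hF₀ : μ F₀.toSet ≠ ⊤) (hF : F ∈ stoppingFamily μ lam f med F₀) :
    ∑' F' : sparseChildren (stoppingFamily μ lam f med F₀) F, μ (F' : DyadicCube d).toSet ≤
      ENNReal.ofReal (2 * lam) * μ F.toSet := by
  set 𝓕 := stoppingFamily μ lam f med F₀
  have hdisj : (sparseChildren 𝓕 F).PairwiseDisjoint toSet := by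
    intro F₁ h₁ F₂ h₂ hne
    refine disjoint_left.2 fun x hx₁ hx₂ => hne ?_
    rcases le_total F₁.n F₂.n with h | h
    · exact (h₁.2.2 F₂ h₂.1 h₂.2.1 (toSet_subset_of_mem_of_mem h hx₁ hx₂)).symm
    · exact h₂.2.2 F₁ h₁.1 h₁.2.1 (toSet_subset_of_mem_of_mem h hx₂ hx₁)
  have hcover : ⋃ F' ∈ sparseChildren 𝓕 F, F'.toSet ⊆
      ⋃ Q ∈ stoppingChildren μ lam f med F, Q.toSet := iUnion₂_subset fun F' hF' => by
    obtain ⟨Q, hQ, hsub⟩ := exists_stoppingChildren_superset hF'.1 hF hF'.2.1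
    exact hsub.trans (subset_biUnion_of_mem hQ)
  calc ∑' F' : sparseChildren 𝓕 F, μ (F' : DyadicCube d).toSet
      = μ (⋃ F' ∈ sparseChildren 𝓕 F, F'.toSet) :=
        (measure_biUnion (to_countable _) hdisj fun F' _ => F'.measurableSet_toSet).symm
    _ ≤ ∑' Q : stoppingChildren μ lam f med F, μ (Q : DyadicCube d).toSet :=
        (measure_mono hcover).trans (measure_biUnion_le _ (to_countable _) _)
    _ ≤ ENNReal.ofReal (2 * lam) * μ F.toSet := tsum_measure_stoppingChildren_le hlam0 hf
        (measure_ne_top_of_mem_stoppingFamily hF₀ hF)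

/-- Telescoping along the chain of stopping cubes containing `x`, from a cube of generation `j`
down to the last generation containing `x`, where `x` lies outside the bad set. -/
lemma exists_finset_abs_sub_med_le (hmed : ∀ Q : DyadicCube d, IsMedian μ f Q.toSet (med Q))
    (hF₀ : μ F₀.toSet ≠ ⊤) {x : Fin d → ℝ}
    (hx : ∀ G ∈ stoppingFamily μ lam f med F₀,
      x ∉ badSet μ lam f med G \ ⋃ Q ∈ stoppingChildren μ lam f med G, Q.toSet)
    (N : ℕ) : ∀ j, ∀ G ∈ stoppingGen μ lam f med F₀ j, x ∈ G.toSet →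
      x ∉ ⋃ H ∈ stoppingGen μ lam f med F₀ (j + N), H.toSet →
      ∃ S : Finset (DyadicCube d), ↑S ⊆ stoppingFamily μ lam f med F₀ ∧
        (∀ K ∈ S, x ∈ K.toSet ∧ K.n ≤ G.n) ∧
        |f x - med G| + |med G - med G.parent| ≤
          ∑ K ∈ S, (rOscMed μ lam f med K + |med K - med K.parent|) := by
  classical
  induction N with
  | zero => exact fun j G hG hxG hN => absurd (mem_biUnion hG hxG) hN
  | succ N ih =>
    intro j G hG hxG hN
    have hG𝓕 := mem_stoppingFamily hG
    by_cases hxC : x ∈ ⋃ Q ∈ stoppingChildren μ lam f med G, Q.toSet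
    · obtain ⟨H, hH, hxH⟩ := mem_iUnion₂.1 hxC
      have hjN : j + 1 + N = j + (N + 1) := by omega
      obtain ⟨S, hS𝓕, hSx, hS⟩ :=
        ih (j + 1) H (mem_stoppingGen_succ.2 ⟨G, hG, hH⟩) hxH (hjN ▸ hN)
      have hHn := n_lt_of_mem_stoppingChildren hH
      have hGS : G ∉ S := fun h => by linarith [(hSx G h).2]
      have hjump := abs_med_sub_med_le hmed
        (measure_ne_top_of_mem_stoppingFamily hF₀ hG𝓕) hH
      refine ⟨insert G S, ?_, fun K hK => ?_, ?_⟩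
      · rw [Finset.coe_insert]
        exact insert_subset hG𝓕 hS𝓕
      · rcases Finset.mem_insert.1 hK with rfl | hK
        · exact ⟨hxG, le_rfl⟩
        · exact ⟨(hSx K hK).1, (hSx K hK).2.trans hHn.le⟩
      · rw [Finset.sum_insert hGS]
        linarith [abs_sub_le (f x) (med H) (med G)]
    · have hbad : |f x - med G| ≤ rOscMed μ lam f med G :=
        not_lt.1 fun h => hx G hG𝓕 ⟨⟨hxG, h⟩, hxC⟩
      exact ⟨{G}, by simpa using hG𝓕, by simpa using hxG, by simpa using hbad⟩

lemma ae_exists_finset_abs_sub_med_parent_le (hlam0 : 0 < lam) (hlam1 : lam < 1 / 2)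
    (hf : Measurable f) (hmed : ∀ Q : DyadicCube d, IsMedian μ f Q.toSet (med Q))
    (hF₀ : μ F₀.toSet ≠ ⊤) :
    ∀ᵐ x ∂μ, x ∈ F₀.toSet → ∃ S : Finset (DyadicCube d),
      ↑S ⊆ stoppingFamily μ lam f med F₀ ∧ (∀ K ∈ S, x ∈ K.toSet) ∧
      |f x - med F₀.parent| ≤ ∑ K ∈ S, (rOscMed μ lam f med K + |med K - med K.parent|) := by
  have hgood : ∀ᵐ x ∂μ, ∀ G ∈ stoppingFamily μ lam f med F₀,
      x ∉ badSet μ lam f med G \ ⋃ Q ∈ stoppingChildren μ lam f med G, Q.toSet :=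
    (ae_ball_iff (to_countable _)).2 fun G hG => measure_eq_zero_iff_ae_notMem.1
      (measure_badSet_diff_stoppingChildren
        (measure_ne_top_of_mem_stoppingFamily hF₀ hG))
  have hfinite : ∀ᵐ x ∂μ, x ∉ ⋂ k, ⋃ G ∈ stoppingGen μ lam f med F₀ k, G.toSet :=
    measure_eq_zero_iff_ae_notMem.1 (measure_iInter_biUnion_stoppingGen hlam0 hlam1 hf hF₀)
  filter_upwards [hgood, hfinite] with x hx hxN hxF₀
  obtain ⟨N, hN⟩ := not_forall.1 fun h => hxN (mem_iInter.2 h)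
  obtain ⟨S, hS𝓕, hSx, hS⟩ :=
    exists_finset_abs_sub_med_le hmed hF₀ hx N 0 F₀ (mem_singleton F₀) hxF₀ (by simpa using hN)
  exact ⟨S, hS𝓕, fun K hK => (hSx K hK).1, (abs_sub_le _ _ _).trans hS⟩

end Decomposition

/-- median oscillation decomposition for general measures, adapted to the
dyadic martingale BMO. -/
theorem median_oscillation_decomposition (lam : ℝ) (hlam0 : 0 < lam)
    (hlam1 : lam < 1 / 2) :
    ∃ C : ℝ, 0 < C ∧
      ∀ (d : ℕ) (μ : Measure (Fin d → ℝ)), IsLocallyFiniteMeasure μ →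
      ∀ (f : (Fin d → ℝ) → ℝ), Measurable f →
      ∀ (med : DyadicCube d → ℝ),
        (∀ Q : DyadicCube d, 0 < μ Q.toSet → IsMedian μ f Q.toSet (med Q)) →
      ∀ (F₀ : DyadicCube d), 0 < μ F₀.toSet → μ F₀.toSet < ⊤ →
        ∃ 𝓕 : Set (DyadicCube d),
          F₀ ∈ 𝓕 ∧ (∀ F ∈ 𝓕, F.toSet ⊆ F₀.toSet) ∧
          (∀ F ∈ 𝓕, ∑' F' : sparseChildren 𝓕 F, μ (F' : DyadicCube d).toSet ≤
            ENNReal.ofReal (2 * lam) * μ F.toSet) ∧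
          ∀ᵐ x ∂μ, x ∈ F₀.toSet →
            ENNReal.ofReal |f x - med F₀.parent| ≤
              ENNReal.ofReal C *
                ∑' F : 𝓕, (F : DyadicCube d).toSet.indicator
                  (fun _ => ENNReal.ofReal
                    (mOsc μ lam f (F : DyadicCube d).toSet +
                      |med (F : DyadicCube d) - med (F : DyadicCube d).parent|)) x := by
  refine ⟨2, two_pos, fun d μ _ f hf med hmed F₀ _ hF₀ => ?_⟩
  have hmed' (Q : DyadicCube d) : IsMedian μ f Q.toSet (med Q) :=
    (eq_zero_or_pos _).elim (fun h => isMedian_of_measure_eq_zero h _) (hmed Q)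
  refine ⟨stoppingFamily μ lam f med F₀, mem_stoppingFamily (k := 0) (mem_singleton F₀),
    fun F hF => toSet_subset_of_mem_stoppingFamily hF,
    fun F hF => tsum_measure_sparseChildren_le hlam0 hf hF₀.ne hF, ?_⟩
  filter_upwards [ae_exists_finset_abs_sub_med_parent_le hlam0 hlam1 hf hmed' hF₀.ne]
    with x hx hxF₀
  obtain ⟨S, hS𝓕, hSx, hS⟩ := hx hxF₀
  have hr (K : DyadicCube d) (hK : K ∈ S) :
      rOscMed μ lam f med K ≤ 2 * mOsc μ lam f K.toSet :=
    (hmed' K).rOsc_sub_le_two_mul_mOsc hlam0 hlam1 hf K.measurableSet_toSet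
      (measure_ne_top_of_mem_stoppingFamily hF₀.ne (hS𝓕 hK))
  calc ENNReal.ofReal |f x - med F₀.parent|
      ≤ ENNReal.ofReal (2 * ∑ K ∈ S, (mOsc μ lam f K.toSet + |med K - med K.parent|)) := by
        refine ENNReal.ofReal_le_ofReal (hS.trans ?_)
        rw [Finset.mul_sum]
        exact Finset.sum_le_sum fun K hK => by linarith [hr K hK, abs_nonneg (med K - med K.parent)]
    _ ≤ _ := by
        rw [ENNReal.ofReal_mul zero_le_two]
        gcongr
        exact ofReal_sum_le_tsum_indicator (fun K _ => add_nonneg mOsc_nonneg (abs_nonneg _))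
          hS𝓕 hSx
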